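/- Let d ≥ 2, ρ > 0 and G > 1 + γ, and let φ_ρ be the ρ-margin loss. Then φ_ρ is H_relu-calibrated with respect to the adversarial 0/1 loss ℓ_γ if and only if G ≥ ρ > γ. -/

import Mathlib

open scoped RealInnerProductSpace

noncomputable section

/-- A loss assigns a value to a predictor `f`, a point `x`, and a label `y` (±1). -/
abbrev Loss (d : ℕ) := ((EuclideanSpace ℝ (Fin d)) → ℝ) → (EuclideanSpace ℝ (Fin d)) → ℝ → ℝ

variable {d : ℕ}

/-- The inner (conditional) ℓ-risk. -/
def innerRisk (ℓ : Loss d) (f : EuclideanSpace ℝ (Fin d) → ℝ)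
    (x : EuclideanSpace ℝ (Fin d)) (η : ℝ) : ℝ :=
  η * ℓ f x 1 + (1 - η) * ℓ f x (-1)

/-- The minimal inner ℓ-risk over a hypothesis set `H`. -/
def minInnerRisk (ℓ : Loss d) (H : Set (EuclideanSpace ℝ (Fin d) → ℝ))
    (x : EuclideanSpace ℝ (Fin d)) (η : ℝ) : ℝ :=
  ⨅ f : H, innerRisk ℓ f x η

/-- ℓ₁ is H-calibrated with respect to ℓ₂. -/
def Calibrated (H : Set (EuclideanSpace ℝ (Fin d) → ℝ)) (ℓ₁ ℓ₂ : Loss d) : Prop :=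
  ∀ ε > (0:ℝ), ∀ η ∈ Set.Icc (0:ℝ) 1, ∀ x : EuclideanSpace ℝ (Fin d), ‖x‖ ≤ 1 →
    ∃ δ > (0:ℝ), ∀ f ∈ H,
      innerRisk ℓ₁ f x η < minInnerRisk ℓ₁ H x η + δ →
      innerRisk ℓ₂ f x η < minInnerRisk ℓ₂ H x η + ε

/-- The adversarial 0/1 loss with perturbation radius γ. -/
def advLoss (γ : ℝ) : Loss d := fun f x y =>
  ⨆ x' : Metric.closedBall x γ, (if y * f ↑x' ≤ 0 then (1:ℝ) else 0)

/-- A margin-based loss viewed as a loss. -/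
def marginLoss (φ : ℝ → ℝ) : Loss d := fun f x y => φ (y * f x)

/-- The supremum-based surrogate of a margin-based loss. -/
def supLoss (γ : ℝ) (φ : ℝ → ℝ) : Loss d := fun f x y =>
  ⨆ x' : Metric.closedBall x γ, φ (y * f ↑x')

/-- Infimum of f over the closed γ-ball around x. -/
def infBall (γ : ℝ) (f : EuclideanSpace ℝ (Fin d) → ℝ) (x : EuclideanSpace ℝ (Fin d)) : ℝ :=
  ⨅ x' : Metric.closedBall x γ, f ↑x'

/-- Supremum of f over the closed γ-ball around x. -/
def supBall (γ : ℝ) (f : EuclideanSpace ℝ (Fin d) → ℝ) (x : EuclideanSpace ℝ (Fin d)) : ℝ :=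
  ⨆ x' : Metric.closedBall x γ, f ↑x'

/-- x is a distinguishing point for H. -/
def Distinguishing (γ : ℝ) (H : Set (EuclideanSpace ℝ (Fin d) → ℝ))
    (x : EuclideanSpace ℝ (Fin d)) : Prop :=
  ‖x‖ ≤ 1 ∧ (∃ f ∈ H, 0 < infBall γ f x) ∧ (∃ g ∈ H, supBall γ g x < 0)

/-- H is regular for adversarial calibration. -/
def RegularAdv (γ : ℝ) (H : Set (EuclideanSpace ℝ (Fin d) → ℝ)) : Prop :=
  ∃ x, Distinguishing γ H x

/-- H is symmetric. -/
def SymmetricH (H : Set (EuclideanSpace ℝ (Fin d) → ℝ)) : Prop :=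
  ∀ f ∈ H, -f ∈ H

/-- Linear hypothesis set. -/
def Hlin (d : ℕ) : Set (EuclideanSpace ℝ (Fin d) → ℝ) :=
  { f | ∃ w : EuclideanSpace ℝ (Fin d), ‖w‖ = 1 ∧ f = fun x => (inner ℝ w x : ℝ) }

/-- Generalized linear hypothesis set. -/
def Hg (d : ℕ) (g : ℝ → ℝ) (G : ℝ) : Set (EuclideanSpace ℝ (Fin d) → ℝ) :=
  { f | ∃ (w : EuclideanSpace ℝ (Fin d)) (b : ℝ), ‖w‖ = 1 ∧ |b| ≤ G ∧
      f = fun x => g (inner ℝ w x : ℝ) + b }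

/-- ReLU-based hypothesis set. -/
def Hrelu (d : ℕ) (G : ℝ) : Set (EuclideanSpace ℝ (Fin d) → ℝ) :=
  Hg d (fun t => max t 0) G

/-- One-layer ReLU neural network hypothesis set. -/
def Hnn (d n : ℕ) (Λ W : ℝ) : Set (EuclideanSpace ℝ (Fin d) → ℝ) :=
  { f | ∃ (u : Fin n → ℝ) (w : Fin n → EuclideanSpace ℝ (Fin d)),
      (∑ j, |u j|) ≤ Λ ∧ (∀ j, ‖w j‖ ≤ W) ∧
      f = fun x => ∑ j, u j * max (inner ℝ (w j) x : ℝ) 0 }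

/-- All (Borel) measurable functions. -/
def Hall (d : ℕ) : Set (EuclideanSpace ℝ (Fin d) → ℝ) :=
  { f | Measurable f }

/-- The ρ-margin loss. -/
def phiRho (ρ t : ℝ) : ℝ := min 1 (max 0 (1 - t / ρ))


/-! The condition `γ < ρ` is what lets calibration work: a scorer whose `ρ`-margin risk at `x` is
within `(1 - γ/ρ)/2` of optimal must satisfy `|f x| > γ`, and since members of `Hrelu` are
1-Lipschitz such an `f` has constant sign on the `γ`-ball, so its adversarial loss is dominated by
its margin loss; when `ρ ≤ G` the biases `±ρ` make `min η (1 - η)` the optimal margin risk,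
which is also a lower bound for the adversarial risk.
Conversely, if `ρ ≤ γ` the scorer `max ⟪w, ·⟫ 0` at `x = ρ w` is margin-optimal for `η = 1/2` but
misclassifies both labels on the ball; if `G < ρ`, then for `η` slightly below `1/2` the positive
scorer `max ⟪u, ·⟫ 0 + G` at the unit vector `u` is margin-optimal, thanks to the extra reach `1`
of the ReLU part, although a negative scorer has smaller adversarial risk. -/

open Set Filter Topology

local notation "E" => EuclideanSpace ℝ (Fin d)

section Risk

variable {ℓ : Loss d} {H : Set (EuclideanSpace ℝ (Fin d) → ℝ)} {f : EuclideanSpace ℝ (Fin d) → ℝ}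
  {x : EuclideanSpace ℝ (Fin d)} {η : ℝ}

lemma innerRisk_nonneg (hℓ : ∀ f x y, 0 ≤ ℓ f x y) (hη : η ∈ Icc (0 : ℝ) 1) :
    0 ≤ innerRisk ℓ f x η :=
  add_nonneg (mul_nonneg hη.1 (hℓ _ _ _)) (mul_nonneg (sub_nonneg.2 hη.2) (hℓ _ _ _))

lemma minInnerRisk_le (hℓ : ∀ f x y, 0 ≤ ℓ f x y) (hη : η ∈ Icc (0 : ℝ) 1) (hf : f ∈ H) :
    minInnerRisk ℓ H x η ≤ innerRisk ℓ f x η :=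
  ciInf_le ⟨0, by rintro _ ⟨g, rfl⟩; exact innerRisk_nonneg hℓ hη⟩ (⟨f, hf⟩ : H)

lemma le_minInnerRisk {a : ℝ} (hH : H.Nonempty) (h : ∀ f ∈ H, a ≤ innerRisk ℓ f x η) :
    a ≤ minInnerRisk ℓ H x η :=
  have : Nonempty H := hH.to_subtype
  le_ciInf fun f => h f f.2

lemma not_calibrated_of_minimizer {ℓ₂ : Loss d} {ε : ℝ} (hε : 0 < ε) (hη : η ∈ Icc (0 : ℝ) 1)
    (hx : ‖x‖ ≤ 1) (hf : f ∈ H) (hopt : innerRisk ℓ f x η ≤ minInnerRisk ℓ H x η)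
    (hgap : minInnerRisk ℓ₂ H x η + ε ≤ innerRisk ℓ₂ f x η) :
    ¬ Calibrated H ℓ ℓ₂ := by
  intro hcal
  obtain ⟨δ, hδ, himp⟩ := hcal ε hε η hη x hx
  exact (himp f hf (by linarith)).not_ge hgap

end Risk

section PhiRho

variable {ρ t : ℝ}

lemma phiRho_nonneg (ρ t : ℝ) : 0 ≤ phiRho ρ t :=
  le_min zero_le_one (le_max_left _ _)

lemma phiRho_of_nonpos (hρ : 0 < ρ) (ht : t ≤ 0) : phiRho ρ t = 1 := by
  have : t / ρ ≤ 0 := div_nonpos_of_nonpos_of_nonneg ht hρ.le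
  exact min_eq_left (le_max_of_le_right (by linarith))

lemma phiRho_of_le (hρ : 0 < ρ) (ht : ρ ≤ t) : phiRho ρ t = 0 := by
  have : 1 ≤ t / ρ := (one_le_div hρ).2 ht
  rw [phiRho, max_eq_left (by linarith), min_eq_right zero_le_one]

lemma one_sub_div_le_phiRho (hρ : 0 ≤ ρ) (ht : 0 ≤ t) : 1 - t / ρ ≤ phiRho ρ t := by
  have : 0 ≤ t / ρ := div_nonneg ht hρ
  exact le_min (by linarith) (le_max_right _ _)

lemma phiRho_le_max (ρ t : ℝ) : phiRho ρ t ≤ max 0 (1 - t / ρ) := min_le_right _ _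

lemma phiRho_antitone (hρ : 0 < ρ) : Antitone (phiRho ρ) := fun _ _ h =>
  min_le_min le_rfl (max_le_max le_rfl (by gcongr))

lemma one_le_phiRho_add_phiRho_neg (hρ : 0 < ρ) (t : ℝ) : 1 ≤ phiRho ρ t + phiRho ρ (-t) := by
  rcases le_total t 0 with ht | ht
  · linarith [phiRho_of_nonpos hρ ht, phiRho_nonneg ρ (-t)]
  · linarith [phiRho_of_nonpos hρ (neg_nonpos.2 ht), phiRho_nonneg ρ t]

end PhiRho

/-- `C_φ(η, t)` in the paper's notation. -/
def marginRisk (φ : ℝ → ℝ) (η t : ℝ) : ℝ := η * φ t + (1 - η) * φ (-t)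

lemma innerRisk_marginLoss (φ : ℝ → ℝ) (f : E → ℝ) (x : E) (η : ℝ) :
    innerRisk (marginLoss φ) f x η = marginRisk φ η (f x) := by
  simp [innerRisk, marginLoss, marginRisk]

section MarginRisk

variable {ρ η t : ℝ}

lemma marginRisk_phiRho_self (hρ : 0 < ρ) : marginRisk (phiRho ρ) η ρ = 1 - η := by
  rw [marginRisk, phiRho_of_le hρ le_rfl, phiRho_of_nonpos hρ (by linarith)]
  ring

lemma marginRisk_phiRho_neg_self (hρ : 0 < ρ) : marginRisk (phiRho ρ) η (-ρ) = η := by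
  rw [marginRisk, neg_neg, phiRho_of_le hρ le_rfl, phiRho_of_nonpos hρ (by linarith)]
  ring

lemma half_le_marginRisk_phiRho_half (hρ : 0 < ρ) (t : ℝ) :
    1 / 2 ≤ marginRisk (phiRho ρ) (1 / 2) t := by
  rw [marginRisk]
  linarith [one_le_phiRho_add_phiRho_neg hρ t]

lemma min_add_le_marginRisk_phiRho {γ : ℝ} (hρ : 0 < ρ) (hγρ : γ < ρ)
    (hη : η ∈ Icc (0 : ℝ) 1) (ht : |t| ≤ γ) :
    min η (1 - η) + (1 - γ / ρ) / 2 ≤ marginRisk (phiRho ρ) η t := by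
  obtain ⟨hη0, hη1⟩ := hη
  have hs : γ / ρ < 1 := (div_lt_one hρ).2 hγρ
  have hband : ∀ s, 0 ≤ s → s ≤ γ → 1 - γ / ρ ≤ phiRho ρ s := fun s hs0 hsγ =>
    (one_sub_div_le_phiRho hρ.le hs0).trans' (by gcongr)
  have hs0 : 0 ≤ γ / ρ := div_nonneg ((abs_nonneg t).trans ht) hρ.le
  rw [marginRisk]
  rcases le_total t 0 with ht0 | ht0
  · rw [phiRho_of_nonpos hρ ht0]
    have := mul_le_mul_of_nonneg_left (hband (-t) (by linarith) (by linarith [neg_abs_le t]))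
      (sub_nonneg.2 hη1)
    rcases le_total η (1 / 2) with hη2 | hη2 <;>
      nlinarith [min_le_left η (1 - η), min_le_right η (1 - η)]
  · rw [phiRho_of_nonpos hρ (by linarith : -t ≤ 0)]
    have := mul_le_mul_of_nonneg_left (hband t ht0 (by linarith [le_abs_self t])) hη0
    rcases le_total η (1 / 2) with hη2 | hη2 <;>
      nlinarith [min_le_left η (1 - η), min_le_right η (1 - η)]

lemma marginRisk_phiRho_le_of_mem_Icc {G M s : ℝ} (hρ : 0 < ρ) (hη : η ∈ Icc (0 : ℝ) 1) (hM : 0 ≤ M)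
    (hGρ : (1 - η) * G ≤ η * ρ) (hGM : (1 - η) * G ≤ η * M) (hs : s ∈ Icc (-G) M) :
    marginRisk (phiRho ρ) η M ≤ marginRisk (phiRho ρ) η s := by
  obtain ⟨hη0, hη1⟩ := hη
  obtain ⟨hGs, hsM⟩ := hs
  simp only [marginRisk]
  rw [phiRho_of_nonpos hρ (by linarith : -M ≤ 0)]
  rcases le_total 0 s with hs0 | hs0
  · rw [phiRho_of_nonpos hρ (by linarith : -s ≤ 0)]
    nlinarith [mul_le_mul_of_nonneg_left (phiRho_antitone hρ hsM) hη0]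
  · have hG : 1 - G / ρ ≤ phiRho ρ (-s) :=
      (one_sub_div_le_phiRho hρ.le (by linarith)).trans (phiRho_antitone hρ (by linarith))
    have hGρ' : (1 - η) * (G / ρ) ≤ η := by
      rw [mul_div_assoc', div_le_iff₀ hρ]; linarith
    have hGM' : (1 - η) * (G / ρ) ≤ η * (M / ρ) := by
      rw [mul_div_assoc', mul_div_assoc', div_le_div_iff_of_pos_right hρ]; exact hGM
    have hmax : η * phiRho ρ M ≤ η - (1 - η) * (G / ρ) := by
      refine (mul_le_mul_of_nonneg_left (phiRho_le_max ρ M) (by nlinarith)).trans ?_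
      rcases le_total 0 (1 - M / ρ) with h | h
      · rw [max_eq_right h]; linarith
      · rw [max_eq_left h]; linarith
    rw [phiRho_of_nonpos hρ hs0]
    nlinarith

end MarginRisk

section AdvLoss

variable {γ : ℝ} {f : EuclideanSpace ℝ (Fin d) → ℝ} {x : EuclideanSpace ℝ (Fin d)} {y η : ℝ}

lemma advLoss_nonneg (γ : ℝ) (f : E → ℝ) (x : E) (y : ℝ) : 0 ≤ advLoss γ f x y :=
  Real.iSup_nonneg fun _ => by split_ifs <;> norm_num

lemma advLoss_le_one (γ : ℝ) (f : E → ℝ) (x : E) (y : ℝ) : advLoss γ f x y ≤ 1 :=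
  Real.iSup_le (fun _ => by split_ifs <;> norm_num) zero_le_one

lemma advLoss_eq_one {x' : E} (hx' : x' ∈ Metric.closedBall x γ) (h : y * f x' ≤ 0) :
    advLoss γ f x y = 1 := by
  refine (advLoss_le_one γ f x y).antisymm ?_
  have hbdd :
      BddAbove (range fun z : Metric.closedBall x γ => if y * f z ≤ 0 then (1 : ℝ) else 0) :=
    ⟨1, by rintro _ ⟨z, rfl⟩; dsimp only; split_ifs <;> norm_num⟩
  simpa [advLoss, h] using le_ciSup hbdd ⟨x', hx'⟩

lemma advLoss_eq_zero (h : ∀ x' ∈ Metric.closedBall x γ, 0 < y * f x') : advLoss γ f x y = 0 := by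
  have : (fun z : Metric.closedBall x γ => if y * f z ≤ 0 then (1 : ℝ) else 0) = fun _ => 0 :=
    funext fun z => if_neg (h z z.2).not_ge
  rw [advLoss, this, Real.iSup_const_zero]

lemma innerRisk_advLoss_le_of_pos (hη1 : η ≤ 1)
    (h : ∀ x' ∈ Metric.closedBall x γ, 0 < f x') : innerRisk (advLoss γ) f x η ≤ 1 - η := by
  rw [innerRisk, advLoss_eq_zero fun x' hx' => by simpa using h x' hx']
  nlinarith [advLoss_le_one γ f x (-1)]

lemma innerRisk_advLoss_le_of_neg (hη0 : 0 ≤ η)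
    (h : ∀ x' ∈ Metric.closedBall x γ, f x' < 0) : innerRisk (advLoss γ) f x η ≤ η := by
  rw [innerRisk, advLoss_eq_zero (y := -1) fun x' hx' => by simpa using h x' hx']
  nlinarith [advLoss_le_one γ f x 1]

lemma min_le_innerRisk_advLoss (hγ : 0 ≤ γ) (hη : η ∈ Icc (0 : ℝ) 1) :
    min η (1 - η) ≤ innerRisk (advLoss γ) f x η := by
  have hx := Metric.mem_closedBall_self (x := x) hγ
  obtain ⟨hη0, hη1⟩ := hη
  rw [innerRisk]
  rcases le_total (f x) 0 with hf | hf
  · rw [advLoss_eq_one hx (by linarith : 1 * f x ≤ 0)]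
    nlinarith [min_le_left η (1 - η), advLoss_nonneg γ f x (-1)]
  · rw [advLoss_eq_one hx (by linarith : -1 * f x ≤ 0)]
    nlinarith [min_le_right η (1 - η), advLoss_nonneg γ f x 1]

lemma min_le_minInnerRisk_advLoss {H : Set (E → ℝ)} (hγ : 0 ≤ γ) (hH : H.Nonempty)
    (hη : η ∈ Icc (0 : ℝ) 1) : min η (1 - η) ≤ minInnerRisk (advLoss γ) H x η :=
  le_minInnerRisk hH fun _ _ => min_le_innerRisk_advLoss hγ hη

/-- A 1-Lipschitz scorer with `|f x| > γ` keeps its sign on the `γ`-ball, so it is misclassified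
adversarially only when it is misclassified at `x`. -/
lemma advLoss_le_phiRho {ρ : ℝ} (hρ : 0 < ρ) (hf : LipschitzWith 1 f) (hfx : γ < |f x|)
    (hy : |y| = 1) : advLoss γ f x y ≤ phiRho ρ (y * f x) := by
  rcases lt_or_ge γ (y * f x) with hpos | hneg
  · refine (advLoss_eq_zero fun x' hx' => ?_).trans_le (phiRho_nonneg ρ _)
    have hdist : |y * f x' - y * f x| ≤ γ := by
      rw [← mul_sub, abs_mul, hy, one_mul, ← Real.dist_eq]
      simpa using (hf.dist_le_mul x' x).trans (by simpa using Metric.mem_closedBall.1 hx')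
    linarith [neg_abs_le (y * f x' - y * f x)]
  · have : y * f x ≤ 0 := by
      by_contra! h
      rw [← one_mul |f x|, ← hy, ← abs_mul, abs_of_pos h] at hfx
      linarith
    rw [phiRho_of_nonpos hρ this]
    exact advLoss_le_one γ f x y

lemma innerRisk_advLoss_le_innerRisk_marginLoss {ρ : ℝ} (hρ : 0 < ρ) (hf : LipschitzWith 1 f)
    (hfx : γ < |f x|) (hη : η ∈ Icc (0 : ℝ) 1) :
    innerRisk (advLoss γ) f x η ≤ innerRisk (marginLoss (phiRho ρ)) f x η := by
  have h₁ := advLoss_le_phiRho hρ hf hfx (y := 1) (by simp)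
  have h₂ := advLoss_le_phiRho hρ hf hfx (y := -1) (by simp)
  rw [one_mul] at h₁
  rw [neg_one_mul] at h₂
  rw [innerRisk, innerRisk_marginLoss, marginRisk]
  exact add_le_add (mul_le_mul_of_nonneg_left h₁ hη.1)
    (mul_le_mul_of_nonneg_left h₂ (sub_nonneg.2 hη.2))

end AdvLoss

section Hrelu

variable {G : ℝ} {f : EuclideanSpace ℝ (Fin d) → ℝ}

lemma mem_Hrelu {w : E} {b : ℝ} (hw : ‖w‖ = 1) (hb : |b| ≤ G) :
    (fun z => max ⟪w, z⟫ 0 + b) ∈ Hrelu d G :=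
  ⟨w, b, hw, hb, rfl⟩

lemma lipschitzWith_one_of_mem_Hrelu (hf : f ∈ Hrelu d G) : LipschitzWith 1 f := by
  obtain ⟨w, b, hw, -, rfl⟩ := hf
  refine LipschitzWith.of_dist_le_mul fun z z' => ?_
  rw [NNReal.coe_one, one_mul, Real.dist_eq, add_sub_add_right_eq_sub, dist_eq_norm]
  calc |max ⟪w, z⟫ 0 - max ⟪w, z'⟫ 0| ≤ |⟪w, z⟫ - ⟪w, z'⟫| := abs_max_sub_max_le_abs _ _ _
    _ = |⟪w, z - z'⟫| := by rw [inner_sub_right]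
    _ ≤ ‖z - z'‖ := by simpa [hw] using abs_real_inner_le_norm w (z - z')

lemma max_inner_zero_le_norm {w : E} (hw : ‖w‖ = 1) (x : E) : max ⟪w, x⟫ 0 ≤ ‖x‖ :=
  max_le (by simpa [hw] using real_inner_le_norm w x) (norm_nonneg x)

lemma mem_Icc_of_mem_Hrelu (hf : f ∈ Hrelu d G) (x : E) : f x ∈ Icc (-G) (‖x‖ + G) := by
  obtain ⟨w, b, hw, hb, rfl⟩ := hf
  have hb' := abs_le.1 hb
  constructor <;> dsimp only <;> linarith [le_max_right ⟪w, x⟫ 0, max_inner_zero_le_norm hw x]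

lemma exists_norm_eq_one (hd : 1 ≤ d) : ∃ w : E, ‖w‖ = 1 :=
  have : Nonempty (Fin d) := ⟨⟨0, hd⟩⟩
  exists_norm_eq _ zero_le_one

lemma Hrelu_nonempty (hd : 1 ≤ d) (hG : 0 ≤ G) : (Hrelu d G).Nonempty :=
  have ⟨_, hw⟩ := exists_norm_eq_one hd
  ⟨_, mem_Hrelu (b := 0) hw (by simpa using hG)⟩

lemma minInnerRisk_marginLoss_Hrelu_le_min {ρ η : ℝ} (hd : 1 ≤ d) (hρ : 0 < ρ) (hρG : ρ ≤ G)
    (hη : η ∈ Icc (0 : ℝ) 1) (x : E) :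
    minInnerRisk (marginLoss (phiRho ρ)) (Hrelu d G) x η ≤ min η (1 - η) := by
  obtain ⟨w, hw, hwx⟩ : ∃ w : E, ‖w‖ = 1 ∧ ⟪w, x⟫ ≤ 0 := by
    obtain ⟨w, hw⟩ := exists_norm_eq_one hd
    rcases le_total ⟪w, x⟫ 0 with h | h
    · exact ⟨w, hw, h⟩
    · exact ⟨-w, by rwa [norm_neg], by rw [inner_neg_left]; linarith⟩
  -- on the half-space `⟪w, ·⟫ ≤ 0` the ReLU vanishes, so every bias `b` is attained as the score
  have hbias : ∀ b, |b| ≤ G →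
      minInnerRisk (marginLoss (phiRho ρ)) (Hrelu d G) x η ≤ marginRisk (phiRho ρ) η b :=
    fun b hb => by
      simpa [innerRisk_marginLoss, max_eq_right hwx] using
        minInnerRisk_le (ℓ := marginLoss (phiRho ρ)) (x := x) (fun _ _ _ => phiRho_nonneg ρ _) hη
          (mem_Hrelu hw hb)
  refine le_min ?_ ?_
  · simpa [marginRisk_phiRho_neg_self hρ] using hbias (-ρ) (by rwa [abs_neg, abs_of_pos hρ])
  · simpa [marginRisk_phiRho_self hρ] using hbias ρ (by rwa [abs_of_pos hρ])

end Hrelu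

section Calibration

variable {γ ρ G : ℝ}

theorem calibrated_Hrelu_of_lt_of_le (hd : 1 ≤ d) (hγ : 0 ≤ γ) (hρ : 0 < ρ) (hγρ : γ < ρ)
    (hρG : ρ ≤ G) : Calibrated (Hrelu d G) (marginLoss (phiRho ρ)) (advLoss γ) := by
  intro ε hε η hη x _
  have hc : 0 < (1 - γ / ρ) / 2 := by linarith [(div_lt_one hρ).2 hγρ]
  refine ⟨min ((1 - γ / ρ) / 2) ε, lt_min hc hε, fun f hf hrisk => ?_⟩
  have hmin := minInnerRisk_marginLoss_Hrelu_le_min hd hρ hρG hη x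
  have hfar : γ < |f x| := by
    by_contra! hle
    have := min_add_le_marginRisk_phiRho hρ hγρ hη hle
    rw [innerRisk_marginLoss] at hrisk
    linarith [min_le_left ((1 - γ / ρ) / 2) ε]
  calc innerRisk (advLoss γ) f x η
      ≤ innerRisk (marginLoss (phiRho ρ)) f x η :=
        innerRisk_advLoss_le_innerRisk_marginLoss hρ (lipschitzWith_one_of_mem_Hrelu hf) hfar hη
    _ < min η (1 - η) + ε := by linarith [min_le_right ((1 - γ / ρ) / 2) ε]
    _ ≤ minInnerRisk (advLoss γ) (Hrelu d G) x η + ε := by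
        gcongr
        exact min_le_minInnerRisk_advLoss hγ (Hrelu_nonempty hd (hρ.le.trans hρG)) hη

theorem lt_of_calibrated_Hrelu (hd : 1 ≤ d) (hγ0 : 0 ≤ γ) (hγ1 : γ < 1) (hρ : 0 < ρ) (hG : 0 < G)
    (hcal : Calibrated (Hrelu d G) (marginLoss (phiRho ρ)) (advLoss γ)) : γ < ρ := by
  by_contra! hργ
  obtain ⟨w, hw⟩ := exists_norm_eq_one hd
  have hinner : ∀ c : ℝ, ⟪w, c • w⟫ = c := fun c => by
    rw [real_inner_smul_right, real_inner_self_eq_norm_sq, hw]; ring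
  set f : E → ℝ := fun z => max ⟪w, z⟫ 0 + 0
  have hf : f ∈ Hrelu d G := mem_Hrelu hw (by simpa using hG.le)
  have hη : (1 / 2 : ℝ) ∈ Icc (0 : ℝ) 1 := by norm_num
  have hx : ‖ρ • w‖ ≤ 1 := by rw [norm_smul, hw, Real.norm_of_nonneg hρ.le]; linarith
  refine not_calibrated_of_minimizer (ε := 1 / 2) one_half_pos hη hx hf ?_ ?_ hcal
  · have hfx : f (ρ • w) = ρ := by simp [f, hinner, hρ.le]
    rw [innerRisk_marginLoss, hfx, marginRisk_phiRho_self hρ]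
    exact le_minInnerRisk ⟨f, hf⟩ fun g _ => by
      rw [innerRisk_marginLoss]; linarith [half_le_marginRisk_phiRho_half hρ (g (ρ • w))]
  · have hball : (ρ - γ) • w ∈ Metric.closedBall (ρ • w) γ := by
      rw [Metric.mem_closedBall, dist_eq_norm, ← sub_smul, norm_smul, hw]
      simp [abs_of_nonneg hγ0]
    have hf₁ : advLoss γ f (ρ • w) 1 = 1 :=
      advLoss_eq_one hball (by simp [f, hinner, hργ])
    have hf₂ : advLoss γ f (ρ • w) (-1) = 1 :=
      advLoss_eq_one (Metric.mem_closedBall_self hγ0) (by simp [f, hinner, hρ.le])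
    have hpos : minInnerRisk (advLoss γ) (Hrelu d G) (ρ • w) (1 / 2) ≤ 1 - 1 / 2 :=
      (minInnerRisk_le (advLoss_nonneg γ) hη (mem_Hrelu hw (abs_of_pos hG).le)).trans
        (innerRisk_advLoss_le_of_pos hη.2 fun _ _ => add_pos_of_nonneg_of_pos (le_max_right _ _) hG)
    rw [innerRisk, hf₁, hf₂]
    linarith

theorem le_of_calibrated_Hrelu (hd : 1 ≤ d) (hγ : 0 ≤ γ) (hρ : 0 < ρ) (hG : 1 + γ < G)
    (hcal : Calibrated (Hrelu d G) (marginLoss (phiRho ρ)) (advLoss γ)) : ρ ≤ G := by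
  by_contra! hGρ
  have hnear : ∀ᶠ η in 𝓝 (1 / 2 : ℝ), (1 - η) * G < η * ρ ∧ (1 - η) * G < η * (1 + G) := by
    have hl : Tendsto (fun η : ℝ => (1 - η) * G) (𝓝 (1 / 2)) (𝓝 ((1 - 1 / 2) * G)) :=
      (by fun_prop : Continuous fun η : ℝ => (1 - η) * G).tendsto _
    exact (hl.eventually_lt (tendsto_id.mul_const ρ) (by linarith)).and
      (hl.eventually_lt (tendsto_id.mul_const (1 + G)) (by linarith))
  obtain ⟨η, ⟨hGρη, hGMη⟩, hη0, hη2⟩ := ((hnear.filter_mono nhdsWithin_le_nhds).and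
    (Ioo_mem_nhdsLT (by norm_num : (0 : ℝ) < 1 / 2))).exists
  have hη : η ∈ Icc (0 : ℝ) 1 := ⟨hη0.le, by linarith⟩
  have hG0 : 0 < G := by linarith
  obtain ⟨u, hu⟩ := exists_norm_eq_one hd
  set f : E → ℝ := fun z => max ⟪u, z⟫ 0 + G
  have hf : f ∈ Hrelu d G := mem_Hrelu hu (abs_of_pos hG0).le
  have hfu : f u = 1 + G := by simp [f, hu]
  refine not_calibrated_of_minimizer (ε := 1 - 2 * η) (by linarith) hη hu.le hf ?_ ?_ hcal
  · refine le_minInnerRisk ⟨f, hf⟩ fun g hg => ?_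
    rw [innerRisk_marginLoss, innerRisk_marginLoss, hfu]
    exact marginRisk_phiRho_le_of_mem_Icc hρ hη (by linarith) hGρη.le hGMη.le
      (by simpa [hu] using mem_Icc_of_mem_Hrelu hg u)
  · have hg : (fun z => max ⟪u, z⟫ 0 + -G) ∈ Hrelu d G := mem_Hrelu hu (by simp [abs_of_pos hG0])
    have hneg : minInnerRisk (advLoss γ) (Hrelu d G) u η ≤ η :=
      (minInnerRisk_le (advLoss_nonneg γ) hη hg).trans <|
        innerRisk_advLoss_le_of_neg hη.1 fun x' hx' => by
          linarith [max_inner_zero_le_norm hu x', norm_le_of_mem_closedBall hx']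
    have hf₂ : advLoss γ f u (-1) = 1 :=
      advLoss_eq_one (Metric.mem_closedBall_self hγ) (by rw [hfu]; linarith)
    rw [innerRisk, hf₂]
    nlinarith [advLoss_nonneg γ f u 1]

end Calibration

theorem stmt14 (d : ℕ) (hd : 2 ≤ d) (γ : ℝ) (hγ0 : 0 < γ) (hγ1 : γ < 1)
    (ρ : ℝ) (hρ : 0 < ρ) (G : ℝ) (hG : 1 + γ < G) :
    Calibrated (Hrelu d G) (marginLoss (phiRho ρ)) (advLoss γ) ↔
      (γ < ρ ∧ ρ ≤ G) := by
  have hd1 : 1 ≤ d := by omega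
  refine ⟨fun hcal => ⟨?_, ?_⟩, fun ⟨hγρ, hρG⟩ => ?_⟩
  · exact lt_of_calibrated_Hrelu hd1 hγ0.le hγ1 hρ (by linarith) hcal
  · exact le_of_calibrated_Hrelu hd1 hγ0.le hρ hG hcal
  · exact calibrated_Hrelu_of_lt_of_le hd1 hγ0.le hρ hγρ hρG

end
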